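/- Let T > 0, T_charge ≥ 0, T_Coverage > 0 be real numbers and n ≥ 1 a natural number. If the single-additional-UAV condition of the cycles-with-limited-energy algorithm holds, namely T_Coverage / n ≥ (n+1)·T + T_charge, then n ≤ √(T_Coverage / T). In particular, the number of subareas in any cycle constructed by the cycles-with-limited-energy algorithm is at most √(T_Coverage / T). -/

import Mathlib

lemma sq_mul_le_of_add_mul_add_le_div {x T c C : ℝ} (hx : 0 < x) (hT : 0 ≤ T) (hc : 0 ≤ c)
    (h : (x + 1) * T + c ≤ C / x) : x ^ 2 * T ≤ C := by
  have hmul : x * ((x + 1) * T + c) ≤ C := by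
    rwa [le_div_iff₀ hx, mul_comm] at h
  nlinarith [mul_nonneg hx.le hc]

theorem cle_cycle_size_bound_general
    (T T_charge T_Coverage : ℝ) (n : ℕ)
    (hT : 0 < T) (hTc : 0 ≤ T_charge) (hn : 1 ≤ n)
    (h : T_Coverage / (n : ℝ) ≥ ((n : ℝ) + 1) * T + T_charge) :
    (n : ℝ) ≤ Real.sqrt (T_Coverage / T) := by
  have hn_pos : (0 : ℝ) < n := by exact_mod_cast hn
  rw [Real.le_sqrt' hn_pos, le_div_iff₀ hT]
  exact sq_mul_le_of_add_mul_add_le_div hn_pos hT.le hTc h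

/-- If the single-additional-UAV condition of the CLE algorithm holds, i.e.
`T_Coverage / n ≥ (n+1)·T + T_charge`, then `n ≤ √(T_Coverage / T)`. -/
theorem cle_cycle_size_bound
    (T T_charge T_Coverage : ℝ) (n : ℕ)
    (hT : 0 < T) (hTc : 0 ≤ T_charge) (hCov : 0 < T_Coverage) (hn : 1 ≤ n)
    (h : T_Coverage / (n : ℝ) ≥ ((n : ℝ) + 1) * T + T_charge) :
    (n : ℝ) ≤ Real.sqrt (T_Coverage / T) :=
  cle_cycle_size_bound_general T T_charge T_Coverage n hT hTc hn h
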